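/- arXiv:math/0512224 — 2 statements merged into one kernel-verified Lean document; each statement's English description precedes it below -/
import Mathlib

section
/- If w(m,u) solves the q-difference equation w(m,u) = w(qm,u) · V(m)/(V(m) − (1−q)(u−m)m) for all m ≠ 0, with V(m) = 1 + am + bm², |q| < 1, and w(q^{n+1}m, u) → 1 as n → ∞, then w(m,u) = ∏_{k=0}^∞ (1 + a m q^k + b m² q^{2k}) / (1 + (a − (1−q)u) m q^k + (b + 1 − q) m² q^{2k}). -/
open Filter

/-- If `w(m,u)` solves `w(m,u) = w(qm,u) V(m)/(V(m) − (1−q)(u−m)m)` with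
`V(m) = 1 + am + bm²`, `|q| < 1`, and `w(q^{n+1}m,u) → 1`, then
`w(m,u) = ∏_{k≥0} (1 + amq^k + bm²q^{2k})/(1 + (a−(1−q)u)mq^k + (b+1−q)m²q^{2k})`. -/
theorem stmt_12 (q a b : ℝ) (hq : |q| < 1) (w : ℝ → ℝ → ℝ) (m u : ℝ)
    (hrec : ∀ m' : ℝ, m' ≠ 0 →
      w m' u = w (q * m') u * (1 + a * m' + b * m' ^ 2) /
        ((1 + a * m' + b * m' ^ 2) - (1 - q) * (u - m') * m'))
    (hden : ∀ k : ℕ,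
      1 + (a - (1 - q) * u) * m * q ^ k + (b + 1 - q) * m ^ 2 * q ^ (2 * k) ≠ 0)
    (hmul : Multipliable (fun k : ℕ =>
      (1 + a * m * q ^ k + b * m ^ 2 * q ^ (2 * k)) /
        (1 + (a - (1 - q) * u) * m * q ^ k + (b + 1 - q) * m ^ 2 * q ^ (2 * k))))
    (hlim : Tendsto (fun n : ℕ => w (q ^ (n + 1) * m) u) atTop (nhds 1)) :
    w m u = ∏' k : ℕ,
      (1 + a * m * q ^ k + b * m ^ 2 * q ^ (2 * k)) /
        (1 + (a - (1 - q) * u) * m * q ^ k + (b + 1 - q) * m ^ 2 * q ^ (2 * k)) := by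
  by_cases hm : m = 0
  · subst hm
    have h1 : w 0 u = 1 := by
      have h2 : Tendsto (fun _ : ℕ => w 0 u) atTop (nhds 1) := by
        simpa using hlim
      exact tendsto_nhds_unique tendsto_const_nhds h2
    simp [h1]
  by_cases hq0 : q = 0
  · subst hq0
    have h1 : w 0 u = 1 := by
      have h2 : Tendsto (fun _ : ℕ => w 0 u) atTop (nhds 1) := by
        simpa [pow_succ] using hlim
      exact tendsto_nhds_unique tendsto_const_nhds h2
    have hr := hrec m hm
    rw [zero_mul, h1, one_mul] at hr
    have htp : (∏' k : ℕ,
        (1 + a * m * (0:ℝ) ^ k + b * m ^ 2 * (0:ℝ) ^ (2 * k)) /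
          (1 + (a - (1 - 0) * u) * m * (0:ℝ) ^ k + (b + 1 - 0) * m ^ 2 * (0:ℝ) ^ (2 * k)))
        = (1 + a * m + b * m ^ 2) / (1 + (a - u) * m + (b + 1) * m ^ 2) := by
      rw [tprod_eq_mulSingle 0 (by
        intro k hk
        rw [zero_pow hk, zero_pow (by omega : 2 * k ≠ 0)]
        simp)]
      norm_num
    rw [htp, hr]
    have hd : (1 + a * m + b * m ^ 2) - (1 - 0) * (u - m) * m
        = 1 + (a - u) * m + (b + 1) * m ^ 2 := by ring
    rw [hd]
  · -- main case
    have key : ∀ n : ℕ, w m u = (∏ k ∈ Finset.range n,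
        (1 + a * m * q ^ k + b * m ^ 2 * q ^ (2 * k)) /
          (1 + (a - (1 - q) * u) * m * q ^ k + (b + 1 - q) * m ^ 2 * q ^ (2 * k)))
        * w (q ^ n * m) u := by
      intro n
      induction n with
      | zero => simp
      | succ n ih =>
        have hne : q ^ n * m ≠ 0 := mul_ne_zero (pow_ne_zero _ hq0) hm
        have hr := hrec (q ^ n * m) hne
        have harg : q * (q ^ n * m) = q ^ (n + 1) * m := by ring
        have hA : (1 + a * (q ^ n * m) + b * (q ^ n * m) ^ 2)
            = 1 + a * m * q ^ n + b * m ^ 2 * q ^ (2 * n) := by ring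
        have hB : (1 + a * (q ^ n * m) + b * (q ^ n * m) ^ 2)
              - (1 - q) * (u - q ^ n * m) * (q ^ n * m)
            = 1 + (a - (1 - q) * u) * m * q ^ n + (b + 1 - q) * m ^ 2 * q ^ (2 * n) := by
          ring
        rw [harg, hB, hA] at hr
        rw [ih, Finset.prod_range_succ, hr]
        ring
    have wlim : Tendsto (fun n : ℕ => w (q ^ n * m) u) atTop (nhds 1) :=
      (tendsto_add_atTop_iff_nat 1).mp hlim
    have h1 : Tendsto (fun n : ℕ => (∏ k ∈ Finset.range n,
        (1 + a * m * q ^ k + b * m ^ 2 * q ^ (2 * k)) /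
          (1 + (a - (1 - q) * u) * m * q ^ k + (b + 1 - q) * m ^ 2 * q ^ (2 * k)))
        * w (q ^ n * m) u) atTop (nhds ((∏' k : ℕ,
        (1 + a * m * q ^ k + b * m ^ 2 * q ^ (2 * k)) /
          (1 + (a - (1 - q) * u) * m * q ^ k + (b + 1 - q) * m ^ 2 * q ^ (2 * k))) * 1)) :=
      hmul.hasProd.tendsto_prod_nat.mul wlim
    rw [mul_one] at h1
    have h2 : Tendsto (fun _ : ℕ => w m u) atTop (nhds ((∏' k : ℕ,
        (1 + a * m * q ^ k + b * m ^ 2 * q ^ (2 * k)) /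
          (1 + (a - (1 - q) * u) * m * q ^ k + (b + 1 - q) * m ^ 2 * q ^ (2 * k))))) :=
      h1.congr fun n => (key n).symm
    exact tendsto_nhds_unique tendsto_const_nhds h2
end

section
/- Let p ∈ (0,1), q = 1/p, λ > 0, and define w_λ(m,u) = C · u^{λ−1} / (−u(p^{−λ}−1)/m ; p)_∞ · m^{−λ} where C is a constant independent of m, u, and (x;p)_∞ = ∏_{k≥0}(1 − x p^k). Then the q-derivative in m satisfies D_{q,m} w_λ(m,u) = (p(1−p^λ)/((1−p)m²)) · w_λ(m,u) · (u − m), where D_{q,m} f(m) = (f(m) − f(qm))/((1−q)m). -/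
/-!
Writing `c = u (p^{-λ} - 1) / m`, the product in `w_λ(m, u)` is `(-c; p)_∞`, and replacing `m`
by `q m = m / p` turns it into `(-c p; p)_∞`. Peeling off the first factor of `(-c; p)_∞` gives
`(-c; p)_∞ = (1 + c) (-c p; p)_∞`, so `w_λ(q m, u) = p^λ (1 + c) w_λ(m, u)`, and the
`q`-difference quotient is then a rational expression in `w_λ(m, u)`.
-/

open Real

noncomputable def qPochhammerInf {𝕜 : Type*} [NormedField 𝕜] (x p : 𝕜) : 𝕜 :=
  ∏' k : ℕ, (1 - x * p ^ k)

section NormedField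

variable {𝕜 : Type*} [NormedField 𝕜] {p : 𝕜}

theorem summable_norm_neg_mul_pow (x : 𝕜) (hp : ‖p‖ < 1) :
    Summable fun k : ℕ => ‖-(x * p ^ k)‖ := by
  simpa only [norm_neg, norm_mul, norm_pow] using
    (summable_geometric_of_lt_one (norm_nonneg p) hp).mul_left ‖x‖

variable [CompleteSpace 𝕜]

theorem multipliable_one_sub_mul_pow (x : 𝕜) (hp : ‖p‖ < 1) :
    Multipliable fun k : ℕ => 1 - x * p ^ k := by
  simpa only [sub_eq_add_neg] using
    multipliable_one_add_of_summable (summable_norm_neg_mul_pow x hp)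

theorem qPochhammerInf_eq_one_sub_mul (x : 𝕜) (hp : ‖p‖ < 1) :
    qPochhammerInf x p = (1 - x) * qPochhammerInf (x * p) p := by
  have hshift : (fun k : ℕ => 1 - x * p ^ (k + 1)) = fun k => 1 - x * p * p ^ k := by
    funext k
    ring
  unfold qPochhammerInf
  rw [tprod_eq_zero_mul' (by rw [hshift]; exact multipliable_one_sub_mul_pow _ hp), hshift,
    pow_zero, mul_one]

theorem qPochhammerInf_ne_zero {x : 𝕜} (hp : ‖p‖ < 1) (hx : ∀ k : ℕ, x * p ^ k ≠ 1) :
    qPochhammerInf x p ≠ 0 := by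
  have hfactor (k : ℕ) : 1 + -(x * p ^ k) ≠ 0 := by
    rw [← sub_eq_add_neg, sub_ne_zero]
    exact (hx k).symm
  simpa only [qPochhammerInf, sub_eq_add_neg] using
    tprod_one_add_ne_zero_of_summable hfactor (summable_norm_neg_mul_pow x hp)

end NormedField

theorem qPochhammerInf_ne_zero_of_nonpos {x p : ℝ} (hx : x ≤ 0) (hp : 0 ≤ p) (hp1 : p < 1) :
    qPochhammerInf x p ≠ 0 :=
  qPochhammerInf_ne_zero (by rwa [norm_of_nonneg hp]) fun k =>
    (mul_nonpos_of_nonpos_of_nonneg hx (pow_nonneg hp k)).trans_lt one_pos |>.ne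

theorem stmt_18_general (p lam Cc m u : ℝ) (hp : 0 < p) (hp1 : p < 1)
    (hlam : 0 < lam) (hm : 0 < m) (hu : 0 < u)
    (w : ℝ → ℝ → ℝ)
    (hw : ∀ m' : ℝ, 0 < m' →
      w m' u = Cc * u ^ (lam - 1) * m' ^ (-lam) /
        ∏' k : ℕ, (1 - (-(u * (p ^ (-lam) - 1) / m')) * p ^ (k : ℕ))) :
    (w m u - w ((1 / p) * m) u) / ((1 - 1 / p) * m)
      = (p * (1 - p ^ lam) / ((1 - p) * m ^ 2)) * w m u * (u - m) := by
  set c := u * (p ^ (-lam) - 1) / m with hc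
  have hc_nonneg : 0 ≤ c := by
    have : 1 ≤ p ^ (-lam) := one_le_rpow_of_pos_of_le_one_of_nonpos hp hp1.le (by linarith)
    positivity
  have hQ : qPochhammerInf (-c * p) p ≠ 0 :=
    qPochhammerInf_ne_zero_of_nonpos (by nlinarith) hp.le hp1
  have hscale : w ((1 / p) * m) u = p ^ lam * (1 + c) * w m u := by
    have harg : u * (p ^ (-lam) - 1) / ((1 / p) * m) = c * p := by
      rw [hc]
      field_simp
    have hpow : ((1 / p) * m) ^ (-lam) = p ^ lam * m ^ (-lam) := by
      rw [mul_rpow (by positivity) hm.le, one_div, inv_rpow hp.le, rpow_neg hp.le, inv_inv]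
    rw [hw m hm, hw _ (by positivity), harg, hpow]
    change _ / qPochhammerInf (-(c * p)) p = _ * (_ / qPochhammerInf (-c) p)
    rw [qPochhammerInf_eq_one_sub_mul (-c) (by rwa [norm_of_nonneg hp.le]), neg_mul]
    have hfirst : (1 : ℝ) - -c ≠ 0 := by linarith
    field_simp
    ring
  have hpc : p ^ lam * c = u * (1 - p ^ lam) / m := by
    rw [hc, rpow_neg hp.le]
    field_simp
  have hone_sub_p : 1 - p ≠ 0 := by linarith
  have hp_sub_one : p - 1 ≠ 0 := by linarith
  rw [hscale, mul_add, mul_one, hpc]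
  field_simp
  ring

/-- For `0 < p < 1`, `q = 1/p`, `λ > 0`, the density
`w_λ(m,u) = C u^{λ−1} m^{−λ} / (−u(p^{−λ}−1)/m ; p)_∞` satisfies the
`q`-difference equation
`D_{q,m} w_λ(m,u) = (p(1−p^λ)/((1−p)m²)) w_λ(m,u) (u − m)`, where
`D_{q,m} f(m) = (f(m) − f(qm))/((1−q)m)` and
`(x;p)_∞ = ∏_{k≥0}(1 − x p^k)`. -/
theorem stmt_18 (p lam Cc m u : ℝ) (hp : 0 < p) (hp1 : p < 1)
    (hlam : 0 < lam) (hC : 0 < Cc) (hm : 0 < m) (hu : 0 < u)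
    (w : ℝ → ℝ → ℝ)
    (hw : ∀ m' : ℝ, 0 < m' →
      w m' u = Cc * u ^ (lam - 1) * m' ^ (-lam) /
        ∏' k : ℕ, (1 - (-(u * (p ^ (-lam) - 1) / m')) * p ^ (k : ℕ))) :
    (w m u - w ((1 / p) * m) u) / ((1 - 1 / p) * m)
      = (p * (1 - p ^ lam) / ((1 - p) * m ^ 2)) * w m u * (u - m) :=
  stmt_18_general p lam Cc m u hp hp1 hlam hm hu w hw
end
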